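/- Assume h ∘ h ∘ h = 0, g₀(h(Y), Y) = 0, h(h(X₀)) = 0, g₀(h(X₀), X₀) = 0, and g₀(h(Y), h(Y)) ≠ 0. Then for every z ∈ V one has g₀(h(Y), h(Y)) · h(z) = g₀(h(h(Y)), z) · h(Y) + g₀(h(Y), z) · h(h(Y)); in other words, ᵉh = (1/g₀(Υ,Υ)) · (Υ ⊗ (ᵉh²(Y))♭ + ᵉh²(Y) ⊗ Υ♭) where Υ := h(Y). -/

import Mathlib

/-!
Both `h` and `h²` vanish on the common orthogonal `K` of `Υ = h Y` and `h² Y`. For `h²` this is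
because `h² k` is orthogonal to `Y` and `X₀` and isotropic (`h³ = 0`), hence zero. Since `Y` and
`Υ` are dual, up to the factor `g₀(Υ, Υ)`, to `h² Y` and `Υ`, every `z` is a combination of `Y`
and `Υ` plus an element of `K`; for `h²` and `z = X₀` this gives `g₀(h² Y, X₀) = 0`. Then
`h (g₀(Υ, Υ) X₀ - g₀(X₀, Υ) Υ)` is isotropic and orthogonal to `Y` and `X₀`, so `h X₀ ∈ ℝ h² Y`,
and the isotropy argument now shows that `h` itself vanishes on `K`.
-/

section Decomposition

variable {K V W : Type*} [Field K] [AddCommGroup V] [Module K V] [AddCommGroup W] [Module K W]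

theorem LinearMap.smul_apply_eq_of_forall_orthogonal_apply_eq_zero
    (g : V →ₗ[K] V →ₗ[K] K) (f : V →ₗ[K] W) {u₁ u₂ e₁ e₂ : V} {c : K} (hc : c ≠ 0)
    (h₁₁ : g e₁ u₁ = c) (h₁₂ : g e₁ u₂ = 0) (h₂₁ : g e₂ u₁ = 0) (h₂₂ : g e₂ u₂ = c)
    (hf : ∀ k, g k u₁ = 0 → g k u₂ = 0 → f k = 0) (z : V) :
    c • f z = g z u₁ • f e₁ + g z u₂ • f e₂ := by
  have hk := hf (z - (g z u₁ / c) • e₁ - (g z u₂ / c) • e₂)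
    (by simp [h₁₁, h₂₁, hc]) (by simp [h₁₂, h₂₂, hc])
  rw [sub_sub, map_sub, sub_eq_zero] at hk
  rw [hk, map_add, map_smul, map_smul, smul_add, smul_smul, smul_smul, mul_div_cancel₀ _ hc,
    mul_div_cancel₀ _ hc]

end Decomposition

section NilpotentPotential

variable {V : Type*} [AddCommGroup V] [Module ℝ V] {g₀ : V →ₗ[ℝ] V →ₗ[ℝ] ℝ} {h : V →ₗ[ℝ] V}
  {Y X₀ : V}

theorem map_eq_zero_of_map_map_eq_zero (hsymm : ∀ u v : V, g₀ (h u) v = g₀ u (h v))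
    (hpos : ∀ w : V, w ≠ 0 → g₀ w Y = 0 → g₀ w X₀ = 0 → 0 < g₀ w w) {v : V}
    (hvY : g₀ (h v) Y = 0) (hvX : g₀ (h v) X₀ = 0) (hv : h (h v) = 0) : h v = 0 := by
  by_contra hne
  have hiso : g₀ (h v) (h v) = 0 := by rw [hsymm, hv, map_zero]
  exact (hpos _ hne hvY hvX).ne' hiso

theorem map_map_eq_zero_of_orthogonal (hsymm : ∀ u v : V, g₀ (h u) v = g₀ u (h v))
    (hpos : ∀ w : V, w ≠ 0 → g₀ w Y = 0 → g₀ w X₀ = 0 → 0 < g₀ w w)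
    (hnil : ∀ v, h (h (h v)) = 0) (hhhX : h (h X₀) = 0) {k : V}
    (hk : g₀ k (h (h Y)) = 0) : h (h k) = 0 :=
  map_eq_zero_of_map_map_eq_zero hsymm hpos (by rwa [hsymm, hsymm])
    (by rw [hsymm, hsymm, hhhX, map_zero]) (hnil k)

theorem smul_apply_eq_of_forall_orthogonal_map_Y_apply_eq_zero {W : Type*} [AddCommGroup W]
    [Module ℝ W] (hg₀symm : ∀ u v : V, g₀ u v = g₀ v u)
    (hsymm : ∀ u v : V, g₀ (h u) v = g₀ u (h v)) (hnil : ∀ v, h (h (h v)) = 0)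
    (hhYY : g₀ (h Y) Y = 0) (hne : g₀ (h Y) (h Y) ≠ 0) (f : V →ₗ[ℝ] W)
    (hf : ∀ k, g₀ k (h Y) = 0 → g₀ k (h (h Y)) = 0 → f k = 0) (z : V) :
    g₀ (h Y) (h Y) • f z = g₀ z (h Y) • f (h Y) + g₀ z (h (h Y)) • f Y :=
  LinearMap.smul_apply_eq_of_forall_orthogonal_apply_eq_zero g₀ f hne rfl
    (by rw [hsymm, hnil, map_zero]) (by rw [hg₀symm, hhYY]) (by rw [← hsymm]) hf z

theorem smul_map_X₀_eq_smul_map_map_Y (hg₀symm : ∀ u v : V, g₀ u v = g₀ v u)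
    (hsymm : ∀ u v : V, g₀ (h u) v = g₀ u (h v))
    (hpos : ∀ w : V, w ≠ 0 → g₀ w Y = 0 → g₀ w X₀ = 0 → 0 < g₀ w w)
    (hnil : ∀ v, h (h (h v)) = 0) (hhYY : g₀ (h Y) Y = 0) (hhhX : h (h X₀) = 0)
    (hhXX : g₀ (h X₀) X₀ = 0) (hne : g₀ (h Y) (h Y) ≠ 0) :
    g₀ (h Y) (h Y) • h X₀ = g₀ X₀ (h Y) • h (h Y) := by
  have hb : g₀ X₀ (h (h Y)) = 0 := by
    have hdec := smul_apply_eq_of_forall_orthogonal_map_Y_apply_eq_zero hg₀symm hsymm hnil hhYY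
      hne (h ∘ₗ h) (fun k _ hk ↦ map_map_eq_zero_of_orthogonal hsymm hpos hnil hhhX hk) X₀
    simp only [LinearMap.comp_apply, hhhX, hnil, smul_zero, zero_add] at hdec
    refine (smul_eq_zero.mp hdec.symm).resolve_right fun h2Y ↦ hne ?_
    rw [hsymm, h2Y, map_zero]
  set c := g₀ (h Y) (h Y)
  set a := g₀ X₀ (h Y)
  have hw : h (c • X₀ - a • h Y) = 0 := by
    refine map_eq_zero_of_map_map_eq_zero hsymm hpos ?_ ?_ ?_
    · rw [hsymm]
      simp only [map_sub, map_smul, LinearMap.sub_apply, LinearMap.smul_apply, smul_eq_mul]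
      ring
    · simp only [map_sub, map_smul, LinearMap.sub_apply, LinearMap.smul_apply, smul_eq_mul,
        hhXX, hg₀symm (h (h Y)), hb]
      ring
    · simp only [map_sub, map_smul, hhhX, hnil, smul_zero, sub_zero]
  rwa [map_sub, map_smul, map_smul, sub_eq_zero] at hw

theorem map_eq_zero_of_orthogonal (hg₀symm : ∀ u v : V, g₀ u v = g₀ v u)
    (hsymm : ∀ u v : V, g₀ (h u) v = g₀ u (h v))
    (hpos : ∀ w : V, w ≠ 0 → g₀ w Y = 0 → g₀ w X₀ = 0 → 0 < g₀ w w)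
    (hnil : ∀ v, h (h (h v)) = 0) (hhYY : g₀ (h Y) Y = 0) (hhhX : h (h X₀) = 0)
    (hhXX : g₀ (h X₀) X₀ = 0) (hne : g₀ (h Y) (h Y) ≠ 0) {k : V}
    (hk₁ : g₀ k (h Y) = 0) (hk₂ : g₀ k (h (h Y)) = 0) : h k = 0 := by
  have hkX : g₀ k (h X₀) = 0 := by
    have := congrArg (g₀ k)
      (smul_map_X₀_eq_smul_map_map_Y hg₀symm hsymm hpos hnil hhYY hhhX hhXX hne)
    rw [map_smul, map_smul, hk₂, smul_zero, smul_eq_zero] at this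
    exact this.resolve_left hne
  exact map_eq_zero_of_map_map_eq_zero hsymm hpos (by rwa [hsymm]) (by rwa [hsymm])
    (map_map_eq_zero_of_orthogonal hsymm hpos hnil hhhX hk₂)

end NilpotentPotential

theorem stmt4 {V : Type*} [AddCommGroup V] [Module ℝ V]
    (g₀ : V →ₗ[ℝ] V →ₗ[ℝ] ℝ) (hg₀symm : ∀ u v : V, g₀ u v = g₀ v u)
    (h : V →ₗ[ℝ] V) (hsymm : ∀ u v : V, g₀ (h u) v = g₀ u (h v))
    (Y X₀ : V)
    (hpos : ∀ w : V, w ≠ 0 → g₀ w Y = 0 → g₀ w X₀ = 0 → 0 < g₀ w w)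
    (hnil : h ∘ₗ (h ∘ₗ h) = 0)
    (hhYY : g₀ (h Y) Y = 0) (hhhX : h (h X₀) = 0) (hhXX : g₀ (h X₀) X₀ = 0)
    (hne : g₀ (h Y) (h Y) ≠ 0) :
    ∀ z : V, g₀ (h Y) (h Y) • h z = g₀ (h (h Y)) z • h Y + g₀ (h Y) z • h (h Y) := by
  have hnil' : ∀ v, h (h (h v)) = 0 := LinearMap.congr_fun hnil
  intro z
  rw [smul_apply_eq_of_forall_orthogonal_map_Y_apply_eq_zero hg₀symm hsymm hnil' hhYY hne h
      (fun _ ↦ map_eq_zero_of_orthogonal hg₀symm hsymm hpos hnil' hhYY hhhX hhXX hne) z,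
    hg₀symm z, hg₀symm z, add_comm]
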